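/- For every natural number n, the ∞pede strategy profiles p_n and π_n in which both agents always take are subgame perfect equilibria: SPE(p_n) ∧ SPE(π_n). -/

import Mathlib

noncomputable section

/-- The two agents. -/
inductive Ag : Type
  | A
  | B
deriving DecidableEq

/-- The set of choices `{1, 2}`. -/
inductive Choice : Type
  | one
  | two
deriving DecidableEq

/-- The polynomial functor whose final coalgebra is the set of finite or
infinite strategy profiles: a node is either an ending position carrying a
utility assignment (no children) or an internal position carrying an agent
and a choice (two children, indexed by `Bool`). -/
def SPF (Agent : Type) : PFunctor.{0} :=
  ⟨(Agent → ℝ) ⊕ (Agent × Choice), fun x => Sum.rec (fun _ => Empty) (fun _ => Bool) x⟩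

/-- Finite or infinite strategy profiles, as the M-type (final coalgebra). -/
def StratProf (Agent : Type) : Type :=
  (SPF Agent).M

/-- The ending position `⟨u⟩`. -/
def leafP {Agent : Type} (u : Agent → ℝ) : StratProf Agent :=
  PFunctor.M.mk ⟨Sum.inl u, fun e => Empty.elim e⟩

/-- The strategy profile `⟨a, c, s₁, s₂⟩`. -/
def nodeP {Agent : Type} (a : Agent) (c : Choice) (s₁ s₂ : StratProf Agent) :
    StratProf Agent :=
  PFunctor.M.mk ⟨Sum.inr (a, c), fun b => bif b then s₂ else s₁⟩

/-- The child selected by choice `c`. -/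
def cchild {Agent : Type} (c : Choice) (s₁ s₂ : StratProf Agent) : StratProf Agent :=
  match c with
  | .one => s₁
  | .two => s₂

/-- `conv s`: following the choices of `s` reaches an ending position after
finitely many steps (inductive definition). -/
inductive Conv {Agent : Type} : StratProf Agent → Prop
  | leaf (u : Agent → ℝ) : Conv (leafP u)
  | node1 (a : Agent) (s₁ s₂ : StratProf Agent) :
      Conv s₁ → Conv (nodeP a Choice.one s₁ s₂)
  | node2 (a : Agent) (s₁ s₂ : StratProf Agent) :
      Conv s₂ → Conv (nodeP a Choice.two s₁ s₂)

/-- The graph of the (partial) utility assignment `ŝ`: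
`UtilR s u` holds iff following the choices of `s` reaches the ending
position `⟨u⟩`. -/
inductive UtilR {Agent : Type} : StratProf Agent → (Agent → ℝ) → Prop
  | leaf (u : Agent → ℝ) : UtilR (leafP u) u
  | node1 (a : Agent) (s₁ s₂ : StratProf Agent) (u : Agent → ℝ) :
      UtilR s₁ u → UtilR (nodeP a Choice.one s₁ s₂) u
  | node2 (a : Agent) (s₁ s₂ : StratProf Agent) (u : Agent → ℝ) :
      UtilR s₂ u → UtilR (nodeP a Choice.two s₁ s₂) u

open Classical in
/-- The utility assignment `ŝ` (an arbitrary default on non-convergent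
profiles). -/
def util {Agent : Type} (s : StratProf Agent) : Agent → ℝ :=
  if h : ∃ u, UtilR s u then h.choose else fun _ => 0

/-- `□P`, the coinductive `always` modality: `P` holds at every position of
the strategy profile (greatest fixed point). -/
def Always {Agent : Type} (P : StratProf Agent → Prop) (s : StratProf Agent) : Prop :=
  ∃ R : StratProf Agent → Prop, R s ∧ ∀ t, R t →
    P t ∧ ∀ a c s₁ s₂, t = nodeP a c s₁ s₂ → R s₁ ∧ R s₂

/-- `PE s`: `s` is always-convergent and the choice at the root of `s` is at
least as good, for the agent who owns the root, as the other choice. -/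
def PE {Agent : Type} (s : StratProf Agent) : Prop :=
  Always Conv s ∧
    (∀ a s₁ s₂, s = nodeP a Choice.one s₁ s₂ → util s₁ a ≥ util s₂ a) ∧
    (∀ a s₁ s₂, s = nodeP a Choice.two s₁ s₂ → util s₂ a ≥ util s₁ a)

/-- Subgame perfect equilibrium: `□PE`. -/
def SPE {Agent : Type} : StratProf Agent → Prop :=
  Always PE

/-- `s =_g s'`: the two strategy profiles have the same underlying game
(coinductive definition). -/
def SameGame {Agent : Type} (s s' : StratProf Agent) : Prop :=
  ∃ R : StratProf Agent → StratProf Agent → Prop, R s s' ∧ ∀ t t', R t t' →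
    (∃ u, t = leafP u ∧ t' = leafP u) ∨
    (∃ a c c' s₁ s₂ s₁' s₂',
      t = nodeP a c s₁ s₂ ∧ t' = nodeP a c' s₁' s₂' ∧ R s₁ s₁' ∧ R s₂ s₂')

/-- `Rat_∞`: rationality for finite or infinite strategy profiles
(coinductive definition). -/
def RatInf {Agent : Type} (s : StratProf Agent) : Prop :=
  ∃ R : StratProf Agent → Prop, R s ∧ ∀ t, R t →
    (∃ u, t = leafP u) ∨
    (∃ a c s₁ s₂ s₁' s₂', t = nodeP a c s₁ s₂ ∧
      SameGame (nodeP a c s₁' s₂') (nodeP a c s₁ s₂) ∧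
      SPE (nodeP a c s₁' s₂') ∧ R (cchild c s₁ s₂))

/-- `diverg`: following the choices never reaches an ending position
(coinductive definition). -/
def Diverg {Agent : Type} (s : StratProf Agent) : Prop :=
  ∃ R : StratProf Agent → Prop, R s ∧ ∀ t, R t →
    ∃ a c s₁ s₂, t = nodeP a c s₁ s₂ ∧ R (cchild c s₁ s₂)

/-- Utilities of the leaf reached when Alice takes at her `n`-th position of
the ∞pede: `A ↦ 2^(2n+2)`, `B ↦ 2^(2n)`. -/
def uAp (n : ℕ) : Ag → ℝ := fun x =>
  match x with
  | Ag.A => (2 : ℝ) ^ (2 * n + 2)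
  | Ag.B => (2 : ℝ) ^ (2 * n)

/-- Utilities of the leaf reached when Bob takes at his `n`-th position of
the ∞pede: `A ↦ 2^(2n+1)`, `B ↦ 2^(2n+3)`. -/
def uBp (n : ℕ) : Ag → ℝ := fun x =>
  match x with
  | Ag.A => (2 : ℝ) ^ (2 * n + 1)
  | Ag.B => (2 : ℝ) ^ (2 * n + 3)

/-- States for the mutual corecursion defining the `always take` profiles
`p_n` and `π_n` of the ∞pede. -/
inductive PedSt : Type
  | pS (n : ℕ)
  | piS (n : ℕ)
  | lS (u : Ag → ℝ)

/-- One step of the corecursion: `p_n = ⟨A, 1, ⟨A↦2^(2n+2), B↦2^(2n)⟩, π_n⟩`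
and `π_n = ⟨B, 1, ⟨A↦2^(2n+1), B↦2^(2n+3)⟩, p_{n+1}⟩`. -/
def pedStep : PedSt → (SPF Ag).Obj PedSt
  | PedSt.lS u => ⟨Sum.inl u, fun e => Empty.elim e⟩
  | PedSt.pS n =>
      ⟨Sum.inr (Ag.A, Choice.one), fun b => bif b then PedSt.piS n else PedSt.lS (uAp n)⟩
  | PedSt.piS n =>
      ⟨Sum.inr (Ag.B, Choice.one), fun b => bif b then PedSt.pS (n + 1) else PedSt.lS (uBp n)⟩

/-- The ∞pede profile `p_n` where both agents always take. -/
def pped (n : ℕ) : StratProf Ag :=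
  PFunctor.M.corec pedStep (PedSt.pS n)

/-- The ∞pede profile `π_n` where both agents always take. -/
def piped (n : ℕ) : StratProf Ag :=
  PFunctor.M.corec pedStep (PedSt.piS n)

/-! The subprofiles of `p_n` are leaves and the profiles `p_m`, `π_m`; this set is closed under
taking children, so it serves as the invariant witnessing both `□conv` and `□PE`. Every `p_m`
and `π_m` converges in one step, to the leaf its owner takes, and taking gives the owner twice
what passing gives: `2^(2m+2)` against `2^(2m+1)` for A at `p_m`, `2^(2m+3)` against
`2^(2m+2)` for B at `π_m`. -/

section StrategyProfiles

variable {Agent : Type}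

lemma leafP_ne_nodeP (u : Agent → ℝ) (a : Agent) (c : Choice) (s₁ s₂ : StratProf Agent) :
    leafP u ≠ nodeP a c s₁ s₂ := fun h =>
  Sum.inl_ne_inr (congrArg Sigma.fst (PFunctor.M.mk_inj h))

lemma leafP_injective : Function.Injective (leafP : (Agent → ℝ) → StratProf Agent) :=
  fun _ _ h => Sum.inl_injective (congrArg Sigma.fst (PFunctor.M.mk_inj h))

lemma nodeP_inj {a a' : Agent} {c c' : Choice} {s₁ s₂ s₁' s₂' : StratProf Agent}
    (h : nodeP a c s₁ s₂ = nodeP a' c' s₁' s₂') :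
    a = a' ∧ c = c' ∧ s₁ = s₁' ∧ s₂ = s₂' := by
  obtain ⟨hroot, hchildren⟩ := Sigma.mk.inj_iff.mp (PFunctor.M.mk_inj h)
  obtain ⟨rfl, rfl⟩ := Prod.mk.inj (Sum.inr_injective hroot)
  have hchildren := eq_of_heq hchildren
  exact ⟨rfl, rfl, congrFun hchildren false, congrFun hchildren true⟩

lemma corec_eq_leafP {X : Type} {f : X → (SPF Agent).Obj X} {x : X} {u : Agent → ℝ}
    {g : Empty → X} (hx : f x = ⟨Sum.inl u, g⟩) : PFunctor.M.corec f x = leafP u := by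
  rw [PFunctor.M.corec_def, hx]
  exact congrArg
    (fun k : Empty → StratProf Agent => PFunctor.M.mk (F := SPF Agent) ⟨Sum.inl u, k⟩)
    (funext nofun)

lemma corec_eq_nodeP {X : Type} {f : X → (SPF Agent).Obj X} {x y₁ y₂ : X} {a : Agent}
    {c : Choice} (hx : f x = ⟨Sum.inr (a, c), fun b => bif b then y₂ else y₁⟩) :
    PFunctor.M.corec f x = nodeP a c (PFunctor.M.corec f y₁) (PFunctor.M.corec f y₂) := by
  rw [PFunctor.M.corec_def, hx]
  exact congrArg
    (fun k : Bool → StratProf Agent => PFunctor.M.mk (F := SPF Agent) ⟨Sum.inr (a, c), k⟩)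
    (funext fun b => by cases b <;> rfl)

lemma utilR_leafP_iff {u v : Agent → ℝ} : UtilR (leafP u) v ↔ v = u := by
  refine ⟨fun h => ?_, fun h => h ▸ UtilR.leaf u⟩
  generalize ht : leafP u = t at h
  cases h with
  | leaf => exact (leafP_injective ht).symm
  | node1 => exact absurd ht (leafP_ne_nodeP _ _ _ _ _)
  | node2 => exact absurd ht (leafP_ne_nodeP _ _ _ _ _)

lemma utilR_nodeP_one_iff {a : Agent} {s₁ s₂ : StratProf Agent} {u : Agent → ℝ} :
    UtilR (nodeP a Choice.one s₁ s₂) u ↔ UtilR s₁ u := by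
  refine ⟨fun h => ?_, UtilR.node1 a s₁ s₂ u⟩
  generalize ht : nodeP a Choice.one s₁ s₂ = t at h
  cases h with
  | leaf => exact absurd ht.symm (leafP_ne_nodeP _ _ _ _ _)
  | node1 => exact (nodeP_inj ht).2.2.1 ▸ ‹_›
  | node2 => exact absurd (nodeP_inj ht).2.1 nofun

lemma utilR_nodeP_two_iff {a : Agent} {s₁ s₂ : StratProf Agent} {u : Agent → ℝ} :
    UtilR (nodeP a Choice.two s₁ s₂) u ↔ UtilR s₂ u := by
  refine ⟨fun h => ?_, UtilR.node2 a s₁ s₂ u⟩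
  generalize ht : nodeP a Choice.two s₁ s₂ = t at h
  cases h with
  | leaf => exact absurd ht.symm (leafP_ne_nodeP _ _ _ _ _)
  | node1 => exact absurd (nodeP_inj ht).2.1 nofun
  | node2 => exact (nodeP_inj ht).2.2.2 ▸ ‹_›

lemma UtilR.unique {s : StratProf Agent} {u v : Agent → ℝ} (hu : UtilR s u) (hv : UtilR s v) :
    u = v := by
  induction hu with
  | leaf => exact (utilR_leafP_iff.mp hv).symm
  | node1 _ _ _ _ _ ih => exact ih (utilR_nodeP_one_iff.mp hv)
  | node2 _ _ _ _ _ ih => exact ih (utilR_nodeP_two_iff.mp hv)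

lemma util_eq_of_utilR {s : StratProf Agent} {u : Agent → ℝ} (h : UtilR s u) : util s = u := by
  have hex : ∃ v, UtilR s v := ⟨u, h⟩
  rw [util, dif_pos hex]
  exact hex.choose_spec.unique h

lemma util_leafP (u : Agent → ℝ) : util (leafP u) = u :=
  util_eq_of_utilR (UtilR.leaf u)

lemma always_of_invariant {P R : StratProf Agent → Prop}
    (hclosed : ∀ a c s₁ s₂, R (nodeP a c s₁ s₂) → R s₁ ∧ R s₂) (hP : ∀ t, R t → P t)
    {s : StratProf Agent} (hs : R s) : Always P s :=
  ⟨R, hs, fun t ht => ⟨hP t ht, fun a c s₁ s₂ h => hclosed a c s₁ s₂ (h ▸ ht)⟩⟩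

lemma spe_of_invariant {R : StratProf Agent → Prop}
    (hclosed : ∀ a c s₁ s₂, R (nodeP a c s₁ s₂) → R s₁ ∧ R s₂) (hconv : ∀ t, R t → Conv t)
    (hone : ∀ a s₁ s₂, R (nodeP a Choice.one s₁ s₂) → util s₂ a ≤ util s₁ a)
    (htwo : ∀ a s₁ s₂, R (nodeP a Choice.two s₁ s₂) → util s₁ a ≤ util s₂ a)
    {s : StratProf Agent} (hs : R s) : SPE s :=
  always_of_invariant hclosed (fun _ ht => ⟨always_of_invariant hclosed hconv ht,
    fun a s₁ s₂ h => hone a s₁ s₂ (h ▸ ht), fun a s₁ s₂ h => htwo a s₁ s₂ (h ▸ ht)⟩) hs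

end StrategyProfiles

lemma pped_eq_nodeP (n : ℕ) : pped n = nodeP Ag.A Choice.one (leafP (uAp n)) (piped n) := by
  rw [pped, corec_eq_nodeP rfl, corec_eq_leafP rfl]
  rfl

lemma piped_eq_nodeP (n : ℕ) :
    piped n = nodeP Ag.B Choice.one (leafP (uBp n)) (pped (n + 1)) := by
  rw [piped, corec_eq_nodeP rfl, corec_eq_leafP rfl]
  rfl

lemma util_pped (n : ℕ) : util (pped n) = uAp n :=
  util_eq_of_utilR (pped_eq_nodeP n ▸ UtilR.node1 _ _ _ _ (UtilR.leaf _))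

lemma util_piped (n : ℕ) : util (piped n) = uBp n :=
  util_eq_of_utilR (piped_eq_nodeP n ▸ UtilR.node1 _ _ _ _ (UtilR.leaf _))

lemma uBp_le_uAp (n : ℕ) : uBp n Ag.A ≤ uAp n Ag.A :=
  pow_le_pow_right₀ one_le_two (by omega)

lemma uAp_succ_le_uBp (n : ℕ) : uAp (n + 1) Ag.B ≤ uBp n Ag.B :=
  pow_le_pow_right₀ one_le_two (by omega)

def IsPedeSubprofile (t : StratProf Ag) : Prop :=
  (∃ u, t = leafP u) ∨ (∃ m, t = pped m) ∨ (∃ m, t = piped m)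

namespace IsPedeSubprofile

lemma nodeP_cases {a : Ag} {c : Choice} {s₁ s₂ : StratProf Ag}
    (h : IsPedeSubprofile (nodeP a c s₁ s₂)) :
    c = Choice.one ∧ ∃ m, (a = Ag.A ∧ s₁ = leafP (uAp m) ∧ s₂ = piped m) ∨
      (a = Ag.B ∧ s₁ = leafP (uBp m) ∧ s₂ = pped (m + 1)) := by
  rcases h with ⟨u, h⟩ | ⟨m, h⟩ | ⟨m, h⟩
  · exact absurd h.symm (leafP_ne_nodeP _ _ _ _ _)
  · obtain ⟨rfl, rfl, rfl, rfl⟩ := nodeP_inj (h.trans (pped_eq_nodeP m))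
    exact ⟨rfl, m, Or.inl ⟨rfl, rfl, rfl⟩⟩
  · obtain ⟨rfl, rfl, rfl, rfl⟩ := nodeP_inj (h.trans (piped_eq_nodeP m))
    exact ⟨rfl, m, Or.inr ⟨rfl, rfl, rfl⟩⟩

lemma children {a : Ag} {c : Choice} {s₁ s₂ : StratProf Ag}
    (h : IsPedeSubprofile (nodeP a c s₁ s₂)) : IsPedeSubprofile s₁ ∧ IsPedeSubprofile s₂ := by
  obtain ⟨-, m, ⟨-, rfl, rfl⟩ | ⟨-, rfl, rfl⟩⟩ := h.nodeP_cases
  · exact ⟨Or.inl ⟨_, rfl⟩, Or.inr (Or.inr ⟨m, rfl⟩)⟩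
  · exact ⟨Or.inl ⟨_, rfl⟩, Or.inr (Or.inl ⟨m + 1, rfl⟩)⟩

lemma conv {t : StratProf Ag} (h : IsPedeSubprofile t) : Conv t := by
  rcases h with ⟨u, rfl⟩ | ⟨m, rfl⟩ | ⟨m, rfl⟩
  · exact Conv.leaf u
  · exact pped_eq_nodeP m ▸ Conv.node1 _ _ _ (Conv.leaf _)
  · exact piped_eq_nodeP m ▸ Conv.node1 _ _ _ (Conv.leaf _)

lemma util_pass_le_util_take {a : Ag} {s₁ s₂ : StratProf Ag}
    (h : IsPedeSubprofile (nodeP a Choice.one s₁ s₂)) : util s₂ a ≤ util s₁ a := by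
  obtain ⟨-, m, ⟨rfl, rfl, rfl⟩ | ⟨rfl, rfl, rfl⟩⟩ := h.nodeP_cases
  · rw [util_piped, util_leafP]
    exact uBp_le_uAp m
  · rw [util_pped, util_leafP]
    exact uAp_succ_le_uBp m

lemma spe {t : StratProf Ag} (h : IsPedeSubprofile t) : SPE t :=
  spe_of_invariant (fun _ _ _ _ => children) (fun _ => conv)
    (fun _ _ _ => util_pass_le_util_take) (fun _ _ _ h => nomatch h.nodeP_cases.1) h

end IsPedeSubprofile

/-- All the `always take` profiles `p_n` and `π_n` of the ∞pede are subgame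
perfect equilibria: `∀ n, SPE(p_n) ∧ SPE(π_n)`. -/
theorem spe_pped_piped (n : ℕ) : SPE (pped n) ∧ SPE (piped n) :=
  ⟨IsPedeSubprofile.spe (Or.inr (Or.inl ⟨n, rfl⟩)),
    IsPedeSubprofile.spe (Or.inr (Or.inr ⟨n, rfl⟩))⟩
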